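/- arXiv:1503.01506 — 3 statements merged into one kernel-verified Lean document; each statement's English description precedes it below -/
import Mathlib

section
/- If Z ∈ ℂ^{n×n}, s ∈ ℂ^n, V₀ > 0 and 4‖Z‖*_2‖s‖_2 ≤ V₀², then the map G(f) = −(1/V₀²)·diag(f+s)·Z·conj(f+s) maps the closed ball B = {f : ‖f‖_∞ ≤ ‖s‖_2} into itself. -/
/-! Cauchy–Schwarz on row `h` bounds `‖G(f)_h‖` by `V₀⁻² ‖f_h + s_h‖ ‖Z‖*₂ ‖f + s‖₂`; since
`|f_j| ≤ |s_j|`, both `f + s` factors are at most twice the corresponding `s` factors, and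
`4 ‖Z‖*₂ ‖s‖₂ ≤ V₀²` then leaves `‖G(f)_h‖ ≤ |s_h|`. -/

section SqrtSumSq

variable {ι E : Type*} [Fintype ι] [SeminormedAddCommGroup E]

theorem sqrt_sum_norm_sq_le_mul {F : Type*} [SeminormedAddCommGroup F] {g : ι → F} {s : ι → E}
    {c : ℝ} (hc : 0 ≤ c) (h : ∀ j, ‖g j‖ ≤ c * ‖s j‖) :
    √(∑ j, ‖g j‖ ^ 2) ≤ c * √(∑ j, ‖s j‖ ^ 2) := by
  rw [← Real.sqrt_sq hc, ← Real.sqrt_mul (sq_nonneg c), Finset.mul_sum]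
  gcongr with j
  calc ‖g j‖ ^ 2 ≤ (c * ‖s j‖) ^ 2 := by gcongr; exact h j
    _ = c ^ 2 * ‖s j‖ ^ 2 := mul_pow c _ 2

theorem RCLike.norm_sum_mul_conj_le {𝕜 : Type*} [RCLike 𝕜] (a b : ι → 𝕜) :
    ‖∑ j, a j * starRingEnd 𝕜 (b j)‖ ≤ √(∑ j, ‖a j‖ ^ 2) * √(∑ j, ‖b j‖ ^ 2) :=
  calc ‖∑ j, a j * starRingEnd 𝕜 (b j)‖ ≤ ∑ j, ‖a j‖ * ‖b j‖ :=
        (norm_sum_le _ _).trans_eq (by simp only [norm_mul, RCLike.norm_conj])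
    _ ≤ √(∑ j, ‖a j‖ ^ 2) * √(∑ j, ‖b j‖ ^ 2) := Real.sum_mul_le_sqrt_mul_sqrt _ _ _

end SqrtSumSq

theorem norm_mul_mul_sum_conj_le {ι : Type*} [Fintype ι] (Z : Matrix ι ι ℂ) (u : ι → ℂ) (V : ℝ)
    (h : ι) :
    ‖-(1 / (V : ℂ) ^ 2) * u h * ∑ j, Z h j * starRingEnd ℂ (u j)‖ ≤
      1 / V ^ 2 * ‖u h‖ * (√(∑ j, ‖Z h j‖ ^ 2) * √(∑ j, ‖u j‖ ^ 2)) := by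
  rw [norm_mul, norm_mul, norm_neg, norm_div, norm_one, norm_pow, Complex.norm_real,
    Real.norm_eq_abs, sq_abs]
  gcongr
  exact RCLike.norm_sum_mul_conj_le _ _

theorem stmt_3_general (n : ℕ) (Z : Matrix (Fin n) (Fin n) ℂ) (s : Fin n → ℂ) (V₀ : ℝ)
    (hcrit : 4 * (⨆ h, Real.sqrt (∑ j, (‖Z h j‖) ^ 2)) *
        Real.sqrt (∑ k, (‖s k‖) ^ 2) ≤ V₀ ^ 2)
    (f : Fin n → ℂ) (hf : ∀ h, ‖f h‖ ≤ ‖s h‖) :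
    ∀ h, ‖
        (-(1 / (V₀ : ℂ) ^ 2) * (f h + s h) * ∑ j, Z h j * (starRingEnd ℂ) (f j + s j))‖ ≤
      ⨆ k, ‖s k‖ := by
  intro h
  set A := ⨆ i, √(∑ j, ‖Z i j‖ ^ 2)
  set S := √(∑ k, ‖s k‖ ^ 2)
  have hrow : √(∑ j, ‖Z h j‖ ^ 2) ≤ A :=
    le_ciSup (f := fun i => √(∑ j, ‖Z i j‖ ^ 2)) (Set.finite_range _).bddAbove h
  have hA : 0 ≤ A := (Real.sqrt_nonneg _).trans hrow
  have hfs : ∀ j, ‖f j + s j‖ ≤ 2 * ‖s j‖ := fun j =>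
    (norm_add_le _ _).trans (by linarith [hf j])
  have hl2 : √(∑ j, ‖f j + s j‖ ^ 2) ≤ 2 * S := sqrt_sum_norm_sq_le_mul zero_le_two hfs
  calc _ ≤ 1 / V₀ ^ 2 * (2 * ‖s h‖) * (A * (2 * S)) :=
        (norm_mul_mul_sum_conj_le Z (f + s) V₀ h).trans (by gcongr; exacts [hfs h, hl2])
    _ = 4 * A * S / V₀ ^ 2 * ‖s h‖ := by ring
    _ ≤ 1 * ‖s h‖ := by gcongr; exact div_le_one_of_le₀ hcrit (sq_nonneg _)
    _ ≤ ⨆ k, ‖s k‖ := by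
      rw [one_mul]
      exact le_ciSup (f := fun k => ‖s k‖) (Set.finite_range _).bddAbove h

/-- If `f` lies in `B' = {f : |f_h| ≤ |s_h| for all h}` and `4‖Z‖₂*‖s‖₂ ≤ V₀²`,
then `G(f) = -(1/V₀²) diag(f+s) Z conj(f+s)` lies in the ball `{g : ‖g‖_∞ ≤ ‖s‖_∞}`. -/
theorem stmt_3 (n : ℕ) (Z : Matrix (Fin n) (Fin n) ℂ) (s : Fin n → ℂ) (V₀ : ℝ)
    (hV : 0 < V₀)
    (hcrit : 4 * (⨆ h, Real.sqrt (∑ j, (‖Z h j‖) ^ 2)) *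
        Real.sqrt (∑ k, (‖s k‖) ^ 2) ≤ V₀ ^ 2)
    (f : Fin n → ℂ) (hf : ∀ h, ‖f h‖ ≤ ‖s h‖) :
    ∀ h, ‖
        (-(1 / (V₀ : ℂ) ^ 2) * (f h + s h) * ∑ j, Z h j * (starRingEnd ℂ) (f j + s j))‖ ≤
      ⨆ k, ‖s k‖ :=
  stmt_3_general n Z s V₀ hcrit f hf
end

section
/- Suppose the power flow fixed-point equation f = G(f) with G(f) = −(1/V₀²)·diag(f+s)·Z·conj(f+s) has a solution f. Then the voltages v = V₀·𝟙 + Z·conj((f+s)/V₀) and currents i = conj((f+s)/V₀)... satisfy the power flow equations v_h·conj(i_h) = s_h for all h, i.e., any fixed point of G yields a solution of the power flow equations. -/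
open Matrix

theorem add_div_mul_div_eq_of_fixedPoint {K : Type*} [Field K] {V f s w : K} (hV : V ≠ 0)
    (hfix : f = -(1 / V ^ 2) * (f + s) * w) :
    (V + w / V) * ((f + s) / V) = s := by
  field_simp
  field_simp at hfix
  linear_combination hfix

theorem mulVec_div_const_apply {m n : Type*} [Fintype n] {K : Type*} [Field K]
    (A : Matrix m n K) (x : n → K) (c : K) (i : m) :
    (A *ᵥ fun j => x j / c) i = (A *ᵥ x) i / c := by
  simp only [mulVec, dotProduct, Finset.sum_div, mul_div_assoc]

theorem stmt_5_general (n : ℕ) (Z : Matrix (Fin n) (Fin n) ℂ) (s : Fin n → ℂ) (V₀ : ℝ)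
    (hV : 0 < V₀) (f : Fin n → ℂ)
    (hfix : ∀ h, f h = -(1 / (V₀ : ℂ) ^ 2) * (f h + s h) *
        ∑ j, Z h j * (starRingEnd ℂ) (f j + s j)) :
    ∀ h, ((V₀ : ℂ) + Z.mulVec (fun j => (starRingEnd ℂ) (f j + s j) / (V₀ : ℂ)) h) *
        (starRingEnd ℂ) ((starRingEnd ℂ) (f h + s h) / (V₀ : ℂ)) = s h := by
  intro h
  rw [mulVec_div_const_apply, map_div₀, Complex.conj_conj, Complex.conj_ofReal]
  exact add_div_mul_div_eq_of_fixedPoint (by exact_mod_cast hV.ne') (hfix h)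

theorem stmt_5 (n : ℕ) (Z : Matrix (Fin n) (Fin n) ℂ) (s : Fin n → ℂ) (V₀ : ℝ)
    (hV : 0 < V₀) (hZ : IsUnit Z.det) (f : Fin n → ℂ)
    (hfix : ∀ h, f h = -(1 / (V₀ : ℂ) ^ 2) * (f h + s h) *
        ∑ j, Z h j * (starRingEnd ℂ) (f j + s j)) :
    ∀ h, ((V₀ : ℂ) + Z.mulVec (fun j => (starRingEnd ℂ) (f j + s j) / (V₀ : ℂ)) h) *
        (starRingEnd ℂ) ((starRingEnd ℂ) (f h + s h) / (V₀ : ℂ)) = s h :=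
  stmt_5_general n Z s V₀ hV f hfix
end

section
/- Let Z ∈ ℂ^{n×n} have nonzero columns and V₀ > 0. The rhombus region {s : Σ_k |s_k|/s_k^max ≤ 1} is contained in the set P = {s : ∃ diagonal Λ with positive entries such that 4‖ZΛ‖*_∞‖Λ^{-1}s‖_1 ≤ V₀²}; combined with the reverse containment, P equals the rhombus, i.e., the union of all rescaled 1-norm certificate regions is exactly {s : Σ_k |s_k|/s_k^max ≤ 1} with s_k^max = V₀²/(4 max_h|Z_{hk}|). -/
/-! The largest entry of `Z Λ` is `max_k λ_k · max_h |Z h k|`. Hence any certificate `Λ` gives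
`Σ_k |s_k| max_h |Z h k| ≤ ‖Z Λ‖ Σ_k |s_k| / λ_k`, so `s` lies in the rhombus; conversely
`λ_k = 1 / max_h |Z h k|` makes `‖Z Λ‖ ≤ 1` and turns the rhombus inequality into a certificate. -/

open Matrix

namespace Matrix

variable {m n : Type*} [Fintype n] [DecidableEq n]

theorem norm_mul_diagonal_ofReal_apply (Z : Matrix m n ℂ) (lam : n → ℝ) (h : m) (k : n) :
    ‖(Z * diagonal fun k => (lam k : ℂ)) h k‖ = ‖Z h k‖ * |lam k| := by
  rw [mul_diagonal, norm_mul, Complex.norm_real, Real.norm_eq_abs]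

theorem norm_diagonal_ofReal_mulVec_apply (lam : n → ℝ) (s : n → ℂ) (k : n) :
    ‖((diagonal fun k => (lam k : ℂ)) *ᵥ s) k‖ = |lam k| * ‖s k‖ := by
  rw [mulVec_diagonal, norm_mul, Complex.norm_real, Real.norm_eq_abs]

/-- `0 ≤ c` is needed because a real `⨆` over an empty index type is `0`. -/
theorem iSup_iSup_norm_mul_diagonal_ofReal_le_iff [Finite m] (Z : Matrix m n ℂ) {lam : n → ℝ}
    (hlam : ∀ k, 0 ≤ lam k) {c : ℝ} (hc : 0 ≤ c) :
    ⨆ h, ⨆ k, ‖(Z * diagonal fun k => (lam k : ℂ)) h k‖ ≤ c ↔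
      ∀ k, (⨆ h, ‖Z h k‖) * lam k ≤ c := by
  have habs : ∀ k, |lam k| = lam k := fun k => abs_of_nonneg (hlam k)
  simp only [norm_mul_diagonal_ofReal_apply, habs]
  constructor
  · intro hZ k
    rw [Real.iSup_mul_of_nonneg (hlam k)]
    exact Real.iSup_le (fun h => (le_ciSup (Finite.bddAbove_range _) k).trans
      ((le_ciSup (Finite.bddAbove_range _) h).trans hZ)) hc
  · intro hZ
    refine Real.iSup_le (fun h => Real.iSup_le (fun k => ?_) hc) hc
    exact (mul_le_mul_of_nonneg_right (le_ciSup (Finite.bddAbove_range _) h) (hlam k)).trans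
      (hZ k)

end Matrix

theorem Finset.sum_mul_le_mul_sum_div {ι : Type*} [Fintype ι] {M a lam : ι → ℝ} {S : ℝ}
    (ha : ∀ k, 0 ≤ a k) (hlam : ∀ k, 0 < lam k) (hM : ∀ k, M k * lam k ≤ S) :
    ∑ k, M k * a k ≤ S * ∑ k, a k / lam k := by
  rw [Finset.mul_sum]
  refine Finset.sum_le_sum fun k _ => ?_
  calc M k * a k = M k * lam k * (a k / lam k) := by field_simp [(hlam k).ne']
    _ ≤ S * (a k / lam k) := by gcongr; exacts [div_nonneg (ha k) (hlam k).le, hM k]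

theorem sum_div_div_le_one_iff {ι : Type*} [Fintype ι] (a M : ι → ℝ) {V : ℝ} (hV : 0 < V) :
    ∑ k, a k / (V / (4 * M k)) ≤ 1 ↔ 4 * ∑ k, M k * a k ≤ V := by
  have hterm : ∀ k, a k / (V / (4 * M k)) = 4 * (M k * a k) / V := fun k => by
    rw [div_div_eq_mul_div]; ring
  simp only [hterm, ← Finset.mul_sum, ← Finset.sum_div, div_le_one hV]

theorem stmt_18_general (n : ℕ) (Z : Matrix (Fin n) (Fin n) ℂ) (V₀ : ℝ) (hV : 0 < V₀)
    (hcol : ∀ k, ∃ h, Z h k ≠ 0) :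
    {s : Fin n → ℂ |
        ∑ k, Norm.norm (s k) / (V₀ ^ 2 / (4 * ⨆ h, Norm.norm (Z h k))) ≤ 1} =
      {s : Fin n → ℂ | ∃ lam : Fin n → ℝ, (∀ k, 0 < lam k) ∧
        4 * (⨆ h, ⨆ k, Norm.norm
            ((Z * Matrix.diagonal (fun k => ((lam k : ℝ) : ℂ))) h k)) *
          (∑ k, Norm.norm
            ((Matrix.diagonal (fun k => (((lam k)⁻¹ : ℝ) : ℂ))).mulVec s k)) ≤ V₀ ^ 2} := by
  have hcolSup : ∀ k, 0 < ⨆ h, ‖Z h k‖ := fun k => by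
    obtain ⟨h, hz⟩ := hcol k
    exact (norm_pos_iff.2 hz).trans_le
      (le_ciSup (f := fun h => ‖Z h k‖) (Finite.bddAbove_range _) h)
  ext s
  simp only [Set.mem_ofPred_eq, sum_div_div_le_one_iff _ _ (pow_pos hV 2),
    norm_diagonal_ofReal_mulVec_apply]
  constructor
  · intro hs
    refine ⟨fun k => (⨆ h, ‖Z h k‖)⁻¹, fun k => inv_pos.2 (hcolSup k), ?_⟩
    have hS := (iSup_iSup_norm_mul_diagonal_ofReal_le_iff Z (fun k => (inv_pos.2 (hcolSup k)).le)
      zero_le_one).2 fun k => mul_inv_le_one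
    simp only [inv_inv, abs_of_pos (hcolSup _)]
    calc _ ≤ 4 * 1 * ∑ k, (⨆ h, ‖Z h k‖) * ‖s k‖ := by
          gcongr
          exact Finset.sum_nonneg fun k _ => mul_nonneg (hcolSup k).le (norm_nonneg _)
      _ ≤ V₀ ^ 2 := by linarith
  · rintro ⟨lam, hlam, hcert⟩
    have hS := (iSup_iSup_norm_mul_diagonal_ofReal_le_iff Z (fun k => (hlam k).le)
      (Real.iSup_nonneg fun h => Real.iSup_nonneg fun k => norm_nonneg _)).1 le_rfl
    simp only [abs_of_pos (inv_pos.2 (hlam _)), inv_mul_eq_div] at hcert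
    calc 4 * ∑ k, (⨆ h, ‖Z h k‖) * ‖s k‖
        ≤ 4 * ((⨆ h, ⨆ k, ‖(Z * diagonal fun k => (lam k : ℂ)) h k‖) *
          ∑ k, ‖s k‖ / lam k) := by
          gcongr
          exact Finset.sum_mul_le_mul_sum_div (fun k => norm_nonneg _) hlam hS
      _ ≤ V₀ ^ 2 := by rwa [← mul_assoc]

theorem stmt_18 (n : ℕ) [NeZero n] (Z : Matrix (Fin n) (Fin n) ℂ) (V₀ : ℝ) (hV : 0 < V₀)
    (hcol : ∀ k, ∃ h, Z h k ≠ 0) :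
    {s : Fin n → ℂ |
        ∑ k, Norm.norm (s k) / (V₀ ^ 2 / (4 * ⨆ h, Norm.norm (Z h k))) ≤ 1} =
      {s : Fin n → ℂ | ∃ lam : Fin n → ℝ, (∀ k, 0 < lam k) ∧
        4 * (⨆ h, ⨆ k, Norm.norm
            ((Z * Matrix.diagonal (fun k => ((lam k : ℝ) : ℂ))) h k)) *
          (∑ k, Norm.norm
            ((Matrix.diagonal (fun k => (((lam k)⁻¹ : ℝ) : ℂ))).mulVec s k)) ≤ V₀ ^ 2} :=
  stmt_18_general n Z V₀ hV hcol
end
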